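/- arXiv:2001.08083 — 3 statements merged into one kernel-verified Lean document; each statement's English description precedes it below -/
import Mathlib

section
/- For any entrywise nonnegative column stochastic n×n matrix A and every z ∈ ℝ^{Tn}, the non-expansive property ‖D(A)z‖_T ≤ ‖z‖_T holds. -/
noncomputable def l1 {n : ℕ} (z : Fin n → ℝ) : ℝ := ∑ i, |z i|

noncomputable def normT {n T : ℕ} (z : Fin T → Fin n → ℝ) : ℝ := ⨆ ℓ, l1 (z ℓ)

/-- The action of the block matrix `D(A)` on a block vector `z ∈ ℝ^{Tn}`:
`(D(A)z)₁ = A z₁` and `(D(A)z)_r = (1/r)·A z₁ + ((r−1)/r)·z_{r−1}` for `r = 2,…,T`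
(indices here are 0-based). -/
noncomputable def DApply {n T : ℕ} (A : Matrix (Fin n) (Fin n) ℝ)
    (z : Fin T → Fin n → ℝ) : Fin T → Fin n → ℝ :=
  fun r => (1 / ((r : ℕ) + 1) : ℝ) • A.mulVec (z ⟨0, r.pos⟩)
    + (((r : ℕ) : ℝ) / ((r : ℕ) + 1)) • z ⟨(r : ℕ) - 1, lt_of_le_of_lt (Nat.pred_le _) r.isLt⟩

lemma l1_smul {n : ℕ} (c : ℝ) (hc : 0 ≤ c) (x : Fin n → ℝ) : l1 (c • x) = c * l1 x := by
  simp only [l1, Pi.smul_apply, smul_eq_mul, abs_mul, abs_of_nonneg hc, Finset.mul_sum]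

lemma l1_add_le {n : ℕ} (x y : Fin n → ℝ) : l1 (x + y) ≤ l1 x + l1 y := by
  simp only [l1, Pi.add_apply, ← Finset.sum_add_distrib]
  exact Finset.sum_le_sum fun i _ => abs_add_le _ _

lemma l1_mulVec_le {n : ℕ} (A : Matrix (Fin n) (Fin n) ℝ)
    (hA0 : ∀ i j, 0 ≤ A i j) (hA1 : ∀ j, ∑ i, A i j = 1) (x : Fin n → ℝ) :
    l1 (A.mulVec x) ≤ l1 x := by
  unfold l1
  calc ∑ i, |A.mulVec x i| ≤ ∑ i, ∑ j, A i j * |x j| := by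
        refine Finset.sum_le_sum fun i _ => ?_
        calc |A.mulVec x i| = |∑ j, A i j * x j| := rfl
          _ ≤ ∑ j, |A i j * x j| := Finset.abs_sum_le_sum_abs _ _
          _ = ∑ j, A i j * |x j| := by
              refine Finset.sum_congr rfl fun j _ => ?_
              rw [abs_mul, abs_of_nonneg (hA0 i j)]
    _ = ∑ j, (∑ i, A i j) * |x j| := by
        rw [Finset.sum_comm]
        exact Finset.sum_congr rfl fun j _ => (Finset.sum_mul ..).symm
    _ = ∑ j, |x j| := by
        refine Finset.sum_congr rfl fun j _ => ?_
        rw [hA1 j, one_mul]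

/-- For any entrywise nonnegative column stochastic `n×n` matrix `A` and every
`z ∈ ℝ^{Tn}`, the non-expansive property `‖D(A)z‖_T ≤ ‖z‖_T` holds. -/
theorem D_nonexpansive
    (n T : ℕ) (hn : 0 < n) (hT : 0 < T)
    (A : Matrix (Fin n) (Fin n) ℝ)
    (hA0 : ∀ i j, 0 ≤ A i j) (hA1 : ∀ j, ∑ i, A i j = 1)
    (z : Fin T → Fin n → ℝ) :
    normT (DApply A z) ≤ normT z := by
  have : Nonempty (Fin T) := ⟨⟨0, hT⟩⟩
  have hbdd : BddAbove (Set.range fun ℓ => l1 (z ℓ)) := (Set.finite_range _).bddAbove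
  have hle : ∀ ℓ : Fin T, l1 (z ℓ) ≤ normT z := fun ℓ => le_ciSup hbdd ℓ
  refine ciSup_le fun r => ?_
  have h1 : (0:ℝ) ≤ 1 / ((r : ℕ) + 1) := by positivity
  have h2 : (0:ℝ) ≤ ((r : ℕ) : ℝ) / ((r : ℕ) + 1) := by positivity
  calc l1 (DApply A z r)
      ≤ l1 ((1 / ((r : ℕ) + 1) : ℝ) • A.mulVec (z ⟨0, r.pos⟩))
        + l1 ((((r : ℕ) : ℝ) / ((r : ℕ) + 1)) • z ⟨(r : ℕ) - 1, lt_of_le_of_lt (Nat.pred_le _) r.isLt⟩) :=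
        l1_add_le _ _
    _ = (1 / ((r : ℕ) + 1) : ℝ) * l1 (A.mulVec (z ⟨0, r.pos⟩))
        + (((r : ℕ) : ℝ) / ((r : ℕ) + 1)) * l1 (z ⟨(r : ℕ) - 1, lt_of_le_of_lt (Nat.pred_le _) r.isLt⟩) := by
        rw [l1_smul _ h1, l1_smul _ h2]
    _ ≤ (1 / ((r : ℕ) + 1) : ℝ) * normT z + (((r : ℕ) : ℝ) / ((r : ℕ) + 1)) * normT z := by
        gcongr
        exact le_trans (l1_mulVec_le A hA0 hA1 _) (hle _)
        exact hle _
    _ = normT z := by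
        rw [← add_mul]
        have : (1 / ((r : ℕ) + 1) : ℝ) + ((r : ℕ) : ℝ) / ((r : ℕ) + 1) = 1 := by
          field_simp
          ring
        rw [this, one_mul]
end

section
/- Let X₁, …, X_ℓ (ℓ ∈ ℕ₊) be AIMD matrices such that at least one X_g equals the full back-off matrix B = β·I + ((1−β)/n)·e·eᵀ. Then the product X_ℓ ⋯ X₂ X₁ is a column stochastic matrix with all entries strictly positive. -/
/-- `A` is an AIMD matrix: `A = diag(β̃) + (1/n)·e·(eᵀ − β̃ᵀ)` where each `β̃ᵢ ∈ {β, 1}`. -/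
def IsAIMD (n : ℕ) (β : ℝ) (A : Matrix (Fin n) (Fin n) ℝ) : Prop :=
  ∃ b : Fin n → ℝ, (∀ i, b i = β ∨ b i = 1) ∧
    A = Matrix.diagonal b + (1 / (n : ℝ)) • Matrix.of (fun _ j => 1 - b j)

/-- The full back-off AIMD matrix `B = β·I + ((1−β)/n)·e·eᵀ`. -/
noncomputable def Bmat (n : ℕ) (β : ℝ) : Matrix (Fin n) (Fin n) ℝ :=
  β • (1 : Matrix (Fin n) (Fin n) ℝ) + ((1 - β) / (n : ℝ)) • Matrix.of (fun _ _ => (1 : ℝ))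

/-!
Every AIMD matrix is column stochastic, and it is entrywise nonnegative with a positive diagonal;
both properties are preserved under products. A product of nonnegative matrices with positive
diagonals, one factor of which is entrywise positive, is entrywise positive:
`(P * N) i j ≥ P i j * N j j > 0` and `(N * P) i j ≥ N i i * P i j > 0`. The full back-off
matrix `B` is such a positive factor because `β < 1`.
-/

namespace Matrix

variable (R ι : Type*) [Fintype ι] [DecidableEq ι] [Semiring R] [PartialOrder R]
  [IsStrictOrderedRing R]

def nonnegPosDiag : Submonoid (Matrix ι ι R) where
  carrier := {M | (∀ i j, 0 ≤ M i j) ∧ ∀ i, 0 < M i i}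
  mul_mem' {M N} hM hN := by
    refine ⟨fun i j => Finset.sum_nonneg fun k _ => mul_nonneg (hM.1 i k) (hN.1 k j),
      fun i => ?_⟩
    exact Finset.sum_pos' (fun k _ => mul_nonneg (hM.1 i k) (hN.1 k i))
      ⟨i, Finset.mem_univ i, mul_pos (hM.2 i) (hN.2 i)⟩
  one_mem' := ⟨fun i j => by by_cases h : i = j <;> simp [one_apply, h], fun i => by simp⟩

variable {R ι}

lemma mul_pos_of_pos_of_mem_nonnegPosDiag {P N : Matrix ι ι R} (hP : ∀ i j, 0 < P i j)
    (hN : N ∈ nonnegPosDiag R ι) (i j : ι) : 0 < (P * N) i j :=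
  Finset.sum_pos' (fun k _ => mul_nonneg (hP i k).le (hN.1 k j))
    ⟨j, Finset.mem_univ j, mul_pos (hP i j) (hN.2 j)⟩

lemma mul_pos_of_mem_nonnegPosDiag_of_pos {N P : Matrix ι ι R} (hN : N ∈ nonnegPosDiag R ι)
    (hP : ∀ i j, 0 < P i j) (i j : ι) : 0 < (N * P) i j :=
  Finset.sum_pos' (fun k _ => mul_nonneg (hN.1 i k) (hP k j).le)
    ⟨i, Finset.mem_univ i, mul_pos (hN.2 i) (hP i j)⟩

lemma list_prod_pos_of_mem_nonnegPosDiag {L : List (Matrix ι ι R)}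
    (hL : ∀ M ∈ L, M ∈ nonnegPosDiag R ι) {P : Matrix ι ι R} (hPL : P ∈ L)
    (hP : ∀ i j, 0 < P i j) (i j : ι) : 0 < L.prod i j := by
  obtain ⟨s, t, rfl⟩ := List.append_of_mem hPL
  have hs := Submonoid.list_prod_mem _ fun M hM => hL M (List.mem_append_left _ hM)
  have ht := Submonoid.list_prod_mem (nonnegPosDiag R ι) (l := t) fun M hM => hL M (by simp [hM])
  rw [List.prod_append, List.prod_cons]
  exact mul_pos_of_mem_nonnegPosDiag_of_pos hs (mul_pos_of_pos_of_mem_nonnegPosDiag hP ht) i j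

end Matrix

open Matrix

section AIMD

variable {n : ℕ} {β : ℝ} {A : Matrix (Fin n) (Fin n) ℝ}

lemma IsAIMD.exists_apply_eq (hβ1 : β ≤ 1) (hA : IsAIMD n β A) :
    ∃ b : Fin n → ℝ, (∀ i, β ≤ b i ∧ b i ≤ 1) ∧
      ∀ i j, A i j = (if i = j then b i else 0) + (1 - b j) / n := by
  obtain ⟨b, hb, rfl⟩ := hA
  refine ⟨b, fun i => ?_, fun i j => ?_⟩
  · rcases hb i with h | h <;> rw [h] <;> constructor <;> linarith
  · simp [diagonal_apply, div_eq_inv_mul]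

lemma IsAIMD.mem_colStochastic (hβ0 : 0 ≤ β) (hβ1 : β ≤ 1) (hA : IsAIMD n β A) :
    A ∈ colStochastic ℝ (Fin n) := by
  obtain ⟨b, hb, hA⟩ := hA.exists_apply_eq hβ1
  refine mem_colStochastic_iff_sum.2 ⟨fun i j => ?_, fun j => ?_⟩
  · have hdiag : 0 ≤ if i = j then b i else 0 := by split_ifs <;> linarith [hb i]
    have hrank : 0 ≤ (1 - b j) / n := div_nonneg (by linarith [hb j]) n.cast_nonneg
    rw [hA]
    exact add_nonneg hdiag hrank
  · have hn : (n : ℝ) ≠ 0 := by exact_mod_cast j.pos.ne'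
    simp only [hA, Finset.sum_add_distrib, Finset.sum_ite_eq', Finset.mem_univ, if_true,
      Finset.sum_const, Finset.card_univ, Fintype.card_fin, nsmul_eq_mul]
    field_simp
    ring

lemma IsAIMD.mem_nonnegPosDiag (hβ0 : 0 < β) (hβ1 : β ≤ 1) (hA : IsAIMD n β A) :
    A ∈ nonnegPosDiag ℝ (Fin n) := by
  refine ⟨(hA.mem_colStochastic hβ0.le hβ1).1, fun i => ?_⟩
  obtain ⟨b, hb, hA⟩ := hA.exists_apply_eq hβ1
  have hrank : 0 ≤ (1 - b i) / n := div_nonneg (by linarith [hb i]) n.cast_nonneg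
  rw [hA, if_pos rfl]
  linarith [hb i]

lemma Bmat_pos (hβ0 : 0 ≤ β) (hβ1 : β < 1) (i j : Fin n) : 0 < Bmat n β i j := by
  have hn : (0 : ℝ) < n := by exact_mod_cast i.pos
  have hβ : 0 < 1 - β := by linarith
  by_cases h : i = j <;> simp [Bmat, h, one_apply] <;> positivity

end AIMD

theorem prod_aimd_with_backoff_pos_colStochastic_general
    (n : ℕ) (β : ℝ) (hβ0 : 0 < β) (hβ1 : β < 1)
    (l : ℕ) (X : Fin l → Matrix (Fin n) (Fin n) ℝ)
    (hX : ∀ g, IsAIMD n β (X g))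
    (hB : ∃ g, X g = Bmat n β) :
    (∀ i j, 0 < (List.ofFn X).reverse.prod i j) ∧
    (∀ j, ∑ i, (List.ofFn X).reverse.prod i j = 1) := by
  have hAIMD : ∀ M ∈ (List.ofFn X).reverse, IsAIMD n β M := by
    simp only [List.mem_reverse, List.mem_ofFn]
    rintro _ ⟨g, rfl⟩
    exact hX g
  obtain ⟨g, hg⟩ := hB
  have hBmem : Bmat n β ∈ (List.ofFn X).reverse := by
    simpa only [List.mem_reverse, List.mem_ofFn] using ⟨g, hg⟩
  refine ⟨list_prod_pos_of_mem_nonnegPosDiag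
      (fun M hM => (hAIMD M hM).mem_nonnegPosDiag hβ0 hβ1.le) hBmem (Bmat_pos hβ0.le hβ1), ?_⟩
  exact (mem_colStochastic_iff_sum.1 (Submonoid.list_prod_mem _
    fun M hM => (hAIMD M hM).mem_colStochastic hβ0.le hβ1.le)).2

/-- A product `X_ℓ ⋯ X₂ X₁` of AIMD matrices, at least one of which is the full back-off
matrix `B`, is a column stochastic matrix with all entries strictly positive. -/
theorem prod_aimd_with_backoff_pos_colStochastic
    (n : ℕ) (hn : 0 < n) (β : ℝ) (hβ0 : 0 < β) (hβ1 : β < 1)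
    (l : ℕ) (hl : 0 < l) (X : Fin l → Matrix (Fin n) (Fin n) ℝ)
    (hX : ∀ g, IsAIMD n β (X g))
    (hB : ∃ g, X g = Bmat n β) :
    (∀ i j, 0 < (List.ofFn X).reverse.prod i j) ∧
    (∀ j, ∑ i, (List.ofFn X).reverse.prod i j = 1) :=
  prod_aimd_with_backoff_pos_colStochastic_general n β hβ0 hβ1 l X hX hB
end

section
/- Let H = blockdiag(P¹, P²), where for j = 1, 2 the matrix Pʲ is a finite product of matrices of the form D(Aʲ_g) with each Aʲ_g an entrywise nonnegative column stochastic n×n matrix (an empty product being the Tn×Tn identity). Then for every z ∈ W, the non-expansive property ‖Hz‖ ≤ ‖z‖ holds. -/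
/-- The norm on pairs: `‖(y¹, y²)‖ = max{‖y¹‖_T, ‖y²‖_T}`. -/
noncomputable def normPair {n T : ℕ} (y : (Fin T → Fin n → ℝ) × (Fin T → Fin n → ℝ)) : ℝ :=
  max (normT y.1) (normT y.2)

/-! A nonnegative column-stochastic matrix does not increase the ℓ¹ norm, and every block of
`D(A)z` is a convex combination of `A z₁` and an earlier block `z_{r-1}`, so `D(A)` does not
increase `‖·‖_T`; products of such maps, and the two diagonal blocks of `H`, inherit this. -/

open Matrix

lemma l1_nonneg {n : ℕ} (z : Fin n → ℝ) : 0 ≤ l1 z :=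
  Finset.sum_nonneg fun i _ => abs_nonneg (z i)

lemma l1_smul_add_smul_le {n : ℕ} {a b : ℝ} (ha : 0 ≤ a) (hb : 0 ≤ b) (x y : Fin n → ℝ) :
    l1 (a • x + b • y) ≤ a * l1 x + b * l1 y := by
  unfold l1
  rw [Finset.mul_sum, Finset.mul_sum, ← Finset.sum_add_distrib]
  refine Finset.sum_le_sum fun i _ => ?_
  calc |a * x i + b * y i| ≤ |a * x i| + |b * y i| := abs_add_le _ _
    _ = a * |x i| + b * |y i| := by rw [abs_mul, abs_mul, abs_of_nonneg ha, abs_of_nonneg hb]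

lemma l1_mulVec_le_of_mem_colStochastic {n : ℕ} {A : Matrix (Fin n) (Fin n) ℝ}
    (hA : A ∈ colStochastic ℝ (Fin n)) (z : Fin n → ℝ) : l1 (A *ᵥ z) ≤ l1 z := by
  unfold l1
  calc ∑ i, |(A *ᵥ z) i| ≤ ∑ i, ∑ j, A i j * |z j| := by
        refine Finset.sum_le_sum fun i _ => ?_
        calc |(A *ᵥ z) i| = |∑ j, A i j * z j| := rfl
          _ ≤ ∑ j, |A i j * z j| := Finset.abs_sum_le_sum_abs _ _
          _ = ∑ j, A i j * |z j| := by
              simp only [abs_mul, abs_of_nonneg (nonneg_of_mem_colStochastic hA)]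
    _ = ∑ j, (∑ i, A i j) * |z j| := by simp only [Finset.sum_mul]; exact Finset.sum_comm
    _ = ∑ j, |z j| := by simp only [sum_col_of_mem_colStochastic hA, one_mul]

lemma normT_nonneg {n T : ℕ} (z : Fin T → Fin n → ℝ) : 0 ≤ normT z :=
  Real.iSup_nonneg fun ℓ => l1_nonneg (z ℓ)

lemma l1_le_normT {n T : ℕ} (z : Fin T → Fin n → ℝ) (ℓ : Fin T) : l1 (z ℓ) ≤ normT z :=
  le_ciSup (Finite.bddAbove_range fun ℓ => l1 (z ℓ)) ℓ

lemma normT_DApply_le {n T : ℕ} {A : Matrix (Fin n) (Fin n) ℝ}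
    (hA : A ∈ colStochastic ℝ (Fin n)) (z : Fin T → Fin n → ℝ) :
    normT (DApply A z) ≤ normT z := by
  refine Real.iSup_le (fun r => ?_) (normT_nonneg z)
  set a : ℝ := 1 / ((r : ℕ) + 1) with ha
  set b : ℝ := ((r : ℕ) : ℝ) / ((r : ℕ) + 1) with hb
  have hab : a + b = 1 := by rw [ha, hb]; field_simp; ring
  calc l1 (DApply A z r)
      ≤ a * l1 (A *ᵥ z ⟨0, r.pos⟩) + b * l1 (z ⟨(r : ℕ) - 1, _⟩) :=
        l1_smul_add_smul_le (by positivity) (by positivity) _ _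
    _ ≤ a * normT z + b * normT z := by
        gcongr
        · exact (l1_mulVec_le_of_mem_colStochastic hA _).trans (l1_le_normT z _)
        · exact l1_le_normT z _
    _ = normT z := by rw [← add_mul, hab, one_mul]

lemma List.apply_foldl_le_of_forall_mem {α β γ : Type*} [Preorder γ] (N : α → γ)
    {f : α → β → α} {L : List β} (hf : ∀ b ∈ L, ∀ a, N (f a b) ≤ N a) (a : α) :
    N (L.foldl f a) ≤ N a := by
  induction L generalizing a with
  | nil => exact le_rfl
  | cons b L ih =>
    exact (ih (fun c hc => hf c (List.mem_cons_of_mem b hc)) (f a b)).trans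
      (hf b List.mem_cons_self a)

lemma normT_foldl_DApply_le {n T : ℕ} {L : List (Matrix (Fin n) (Fin n) ℝ)}
    (hL : ∀ A ∈ L, A ∈ colStochastic ℝ (Fin n)) (z : Fin T → Fin n → ℝ) :
    normT (L.foldl (fun v A => DApply A v) z) ≤ normT z :=
  List.apply_foldl_le_of_forall_mem normT (fun A hA v => normT_DApply_le (hL A hA) v) z

lemma forall_mem_ofFn_colStochastic {m n : ℕ} {A : Fin m → Matrix (Fin n) (Fin n) ℝ}
    (hnn : ∀ g i j, 0 ≤ A g i j) (hsum : ∀ g j, ∑ i, A g i j = 1) :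
    ∀ B ∈ List.ofFn A, B ∈ colStochastic ℝ (Fin n) := by
  intro B hB
  obtain ⟨g, rfl⟩ := List.mem_ofFn.1 hB
  exact mem_colStochastic_iff_sum.2 ⟨hnn g, hsum g⟩

theorem H_nonexpansive_on_W_general
    (n T : ℕ)
    (m1 m2 : ℕ)
    (A1 : Fin m1 → Matrix (Fin n) (Fin n) ℝ)
    (A2 : Fin m2 → Matrix (Fin n) (Fin n) ℝ)
    (hA1nn : ∀ g i j, 0 ≤ A1 g i j) (hA1 : ∀ g j, ∑ i, A1 g i j = 1)
    (hA2nn : ∀ g i j, 0 ≤ A2 g i j) (hA2 : ∀ g j, ∑ i, A2 g i j = 1)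
    (z1 z2 : Fin T → Fin n → ℝ) :
    normPair ((List.ofFn A1).foldl (fun v Ag => DApply Ag v) z1,
              (List.ofFn A2).foldl (fun v Ag => DApply Ag v) z2) ≤
    normPair (z1, z2) := by
  exact max_le_max (normT_foldl_DApply_le (forall_mem_ofFn_colStochastic hA1nn hA1) z1)
    (normT_foldl_DApply_le (forall_mem_ofFn_colStochastic hA2nn hA2) z2)

/-- Let `H = blockdiag(P¹, P²)`, where each `Pʲ` is a finite product of matrices `D(Aʲ_g)`
with each `Aʲ_g` entrywise nonnegative column stochastic (empty product = identity).
Then `‖Hz‖ ≤ ‖z‖` for every `z ∈ W`. -/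
theorem H_nonexpansive_on_W
    (n T : ℕ) (hn : 0 < n) (hT : 0 < T)
    (m1 m2 : ℕ)
    (A1 : Fin m1 → Matrix (Fin n) (Fin n) ℝ)
    (A2 : Fin m2 → Matrix (Fin n) (Fin n) ℝ)
    (hA1nn : ∀ g i j, 0 ≤ A1 g i j) (hA1 : ∀ g j, ∑ i, A1 g i j = 1)
    (hA2nn : ∀ g i j, 0 ≤ A2 g i j) (hA2 : ∀ g j, ∑ i, A2 g i j = 1)
    (z1 z2 : Fin T → Fin n → ℝ)
    (hz1 : ∀ t, ∑ i, z1 t i = 0) (hz2 : ∀ t, ∑ i, z2 t i = 0) :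
    normPair ((List.ofFn A1).foldl (fun v Ag => DApply Ag v) z1,
              (List.ofFn A2).foldl (fun v Ag => DApply Ag v) z2) ≤
    normPair (z1, z2) :=
  H_nonexpansive_on_W_general n T m1 m2 A1 A2 hA1nn hA1 hA2nn hA2 z1 z2
end
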